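/- arXiv:2006.06837 — 4 statements merged into one kernel-verified Lean document; each statement's English description precedes it below -/
import Mathlib

section
/- If a digit string T satisfies property P (every run of T has base digit in {1,2,4,6} and run length in {2,4,6}), then LSA(T) also satisfies P. -/
/-- Run-length encoding of a digit string (a list of digits). -/
def rle : List ℕ → List (ℕ × ℕ)
  | [] => []
  | a :: t =>
    match rle t with
    | [] => [(a, 1)]
    | (b, n) :: r => if a = b then (a, n + 1) :: r else (a, 1) :: (b, n) :: r

/-- `P` is a run-length representation of the digit string `S`:
multiplicities are positive, adjacent base digits are distinct, and `S` is
the concatenation of the runs. -/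
def IsRLE (S : List ℕ) (P : List (ℕ × ℕ)) : Prop :=
  (∀ p ∈ P, 1 ≤ p.2) ∧ List.Chain' (fun p q => p.1 ≠ q.1) P ∧
    S = (P.map fun p => List.replicate p.2 p.1).flatten

/-- The look-and-say-again step: each run `a^n` is read off as `n n a a`. -/
def lsa (T : List ℕ) : List ℕ := (rle T).flatMap fun p => [p.2, p.2, p.1, p.1]

/-- Property `P`: every run has base digit in `{1,2,4,6}` and length in `{2,4,6}`. -/
def propP (T : List ℕ) : Prop :=
  ∀ p ∈ rle T, p.1 ∈ ({1, 2, 4, 6} : Set ℕ) ∧ p.2 ∈ ({2, 4, 6} : Set ℕ)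

/-!
`lsa T` is the look-and-say word `n₁ a₁ n₂ a₂ … nₖ aₖ` of `T` with every letter doubled, so its
runs are those of the look-and-say word with their lengths doubled. The letters of that word are
base digits and run lengths of `T`, hence lie in `{1, 2, 4, 6}`; and since adjacent base digits
`aᵢ ≠ aᵢ₊₁`, no four consecutive letters agree, so its runs have length `1`, `2` or `3`.
-/

lemma flatten_map_rle (l : List ℕ) :
    ((rle l).map fun p => List.replicate p.2 p.1).flatten = l := by
  induction l with
  | nil => rfl
  | cons a t ih =>
    rcases h : rle t with _ | ⟨⟨b, n⟩, r⟩ <;> simp only [rle.eq_2, h] at ih ⊢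
    · simp_all
    · split_ifs with hab
      · subst hab
        simp [← ih, List.replicate_succ]
      · simp [← ih]

lemma pos_of_mem_rle {l : List ℕ} {p : ℕ × ℕ} (hp : p ∈ rle l) : 0 < p.2 := by
  induction l with
  | nil => simp [rle] at hp
  | cons a t ih =>
    rcases h : rle t with _ | ⟨⟨b, n⟩, r⟩ <;> simp only [rle.eq_2, h] at hp ih
    · simp_all
    · split_ifs at hp <;> aesop

lemma rle_isChain (l : List ℕ) : (rle l).IsChain fun p q => p.1 ≠ q.1 := by
  induction l with
  | nil => simp [rle]
  | cons a t ih =>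
    rcases h : rle t with _ | ⟨⟨b, n⟩, r⟩ <;> simp only [rle.eq_2, h] at ih ⊢
    · simp
    · split_ifs with hab
      · subst hab
        cases r <;> simp_all [List.isChain_cons_cons]
      · simp_all [List.isChain_cons_cons]

lemma replicate_infix_of_mem_rle {l : List ℕ} {p : ℕ × ℕ} (hp : p ∈ rle l) :
    List.replicate p.2 p.1 <:+: l :=
  flatten_map_rle l ▸ List.infix_of_mem_flatten (List.mem_map_of_mem hp)

lemma mem_of_mem_rle {l : List ℕ} {p : ℕ × ℕ} (hp : p ∈ rle l) : p.1 ∈ l :=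
  (replicate_infix_of_mem_rle hp).subset (List.mem_replicate.2 ⟨(pos_of_mem_rle hp).ne', rfl⟩)

lemma rle_flatMap_double (l : List ℕ) :
    rle (l.flatMap fun x => [x, x]) = (rle l).map fun p => (p.1, 2 * p.2) := by
  induction l with
  | nil => rfl
  | cons a t ih =>
    rw [List.flatMap_cons, List.cons_append, List.cons_append, List.nil_append]
    rcases h : rle t with _ | ⟨⟨b, n⟩, r⟩ <;> simp only [rle.eq_2, h, ih, List.map_cons, List.map_nil]
    · simp
    · split_ifs with hab <;> simp [hab, mul_add]

def lookAndSay (T : List ℕ) : List ℕ := (rle T).flatMap fun p => [p.2, p.1]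

lemma lsa_eq_flatMap_lookAndSay (T : List ℕ) :
    lsa T = (lookAndSay T).flatMap fun x => [x, x] := by
  simp [lsa, lookAndSay, List.flatMap_assoc]

lemma not_replicate_four_infix_flatMap {R : List (ℕ × ℕ)} (hR : R.IsChain fun p q => p.1 ≠ q.1)
    (b : ℕ) : ¬ List.replicate 4 b <:+: R.flatMap fun p => [p.2, p.1] := by
  induction R with
  | nil => simp
  | cons p R ih =>
    rw [List.flatMap_cons, List.cons_append, List.cons_append, List.nil_append]
    simp only [List.infix_cons_iff, not_or]
    refine ⟨?_, ?_, ih hR.tail⟩ <;>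
      rcases R with _ | ⟨q, R⟩ <;> simp_all [List.replicate_succ, List.isChain_cons_cons]

lemma snd_le_three_of_mem_rle_lookAndSay {T : List ℕ} {p : ℕ × ℕ}
    (hp : p ∈ rle (lookAndSay T)) : p.2 ≤ 3 := by
  by_contra! h
  have hfour : List.replicate 4 p.1 <:+: List.replicate p.2 p.1 :=
    ⟨[], List.replicate (p.2 - 4) p.1, by rw [List.nil_append, ← List.replicate_add]; congr 1; omega⟩
  exact not_replicate_four_infix_flatMap (rle_isChain T) p.1
    (hfour.trans (replicate_infix_of_mem_rle hp))

lemma mem_of_mem_lookAndSay_of_propP {T : List ℕ} (hT : propP T) {b : ℕ} (hb : b ∈ lookAndSay T) :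
    b ∈ ({1, 2, 4, 6} : Set ℕ) := by
  obtain ⟨q, hq, hbq⟩ := List.mem_flatMap.1 hb
  obtain ⟨hq₁, hq₂⟩ := hT q hq
  simp only [List.mem_cons, List.not_mem_nil, or_false] at hbq
  simp only [Set.mem_insert_iff, Set.mem_singleton_iff] at hq₁ hq₂ ⊢
  rcases hbq with rfl | rfl <;> omega

/-- Property `P` is preserved by the look-and-say-again step. -/
theorem propP_lsa (T : List ℕ) (hT : propP T) : propP (lsa T) := by
  intro p hp
  rw [lsa_eq_flatMap_lookAndSay, rle_flatMap_double, List.mem_map] at hp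
  obtain ⟨⟨b, m⟩, hbm, rfl⟩ := hp
  have hb : b ∈ lookAndSay T := mem_of_mem_rle hbm
  have hm_pos : 0 < m := pos_of_mem_rle hbm
  have hm_le : m ≤ 3 := snd_le_three_of_mem_rle_lookAndSay hbm
  refine ⟨mem_of_mem_lookAndSay_of_propP hT hb, ?_⟩
  simp only [Set.mem_insert_iff, Set.mem_singleton_iff]
  omega
end

section
/- Let d be a digit not in {1,2,4,6}. Suppose T = k ∥ dd where the digit string k satisfies property P (all run base digits in {1,2,4,6}, all run lengths in {2,4,6}) and the last run of k has base digit 2. Then LSA(T) = k' ∥ dd where k' satisfies P and the last run of k' has base digit 2. -/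
/-!
Since the last run of `k` has base digit `2 ≠ d`, the runs of `k ∥ dd` are those of `k` followed
by `d²`. Writing `LSA` as letter doubling after the look-and-say step, `LSA(k ∥ dd)` is the
doubling of `w ∥ 2 ∥ d` with `w = n₁a₁⋯n_ka_k` the look-and-say word of `k`, so `k'` is the doubling
of `w ∥ 2`. Doubling letters keeps the base digits of the runs and doubles their lengths. The
letters of `w ∥ 2` lie in `{1,2,4,6}`, and its runs have length at most `3`: any four consecutive
letters contain two consecutive base digits `aᵢ ≠ aᵢ₊₁` of `k`. Hence `k'` has property `P`.
-/

theorem isRLE_rle : ∀ l : List ℕ, IsRLE l (rle l)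
  | [] => ⟨by simp [rle], List.isChain_nil, rfl⟩
  | a :: t => by
    obtain ⟨hpos, hchain, hflat⟩ := isRLE_rle t
    rw [rle]
    rcases h : rle t with _ | ⟨⟨b, n⟩, r⟩
    · rw [h] at hflat
      subst hflat
      exact ⟨by simp, List.isChain_singleton _, rfl⟩
    · rw [h] at hpos hchain hflat
      dsimp only
      split_ifs with hab
      · subst hab
        refine ⟨List.forall_mem_cons.2 ⟨by simp, (List.forall_mem_cons.1 hpos).2⟩,
          List.isChain_cons.2 (List.isChain_cons.1 hchain), ?_⟩
        simp [hflat, List.replicate_succ]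
      · exact ⟨List.forall_mem_cons.2 ⟨le_rfl, hpos⟩, List.isChain_cons_cons.2 ⟨hab, hchain⟩,
          by simp [hflat]⟩

theorem rle_replicate_append {a n : ℕ} (hn : n ≠ 0) {t : List ℕ}
    (ht : ∀ p ∈ (rle t).head?, a ≠ p.1) :
    rle (List.replicate n a ++ t) = (a, n) :: rle t := by
  induction n, Nat.one_le_iff_ne_zero.2 hn using Nat.le_induction with
  | base =>
    rw [List.replicate_one, List.singleton_append, rle]
    rcases h : rle t with _ | ⟨⟨b, m⟩, r⟩
    · rfl
    · simp_all
  | succ n hn ih =>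
    rw [List.replicate_succ, List.cons_append, rle, ih (by omega)]
    simp

theorem IsRLE.rle_eq : ∀ {S : List ℕ} {P : List (ℕ × ℕ)}, IsRLE S P → rle S = P
  | _, [], ⟨_, _, rfl⟩ => rfl
  | _, (a, n) :: P, ⟨hpos, hchain, rfl⟩ => by
    have hP : rle (P.map fun p => List.replicate p.2 p.1).flatten = P :=
      IsRLE.rle_eq ⟨fun p hp => hpos p (.tail _ hp), hchain.tail, rfl⟩
    have hn : n ≠ 0 := by have := hpos (a, n) (by simp); omega
    rw [List.map_cons, List.flatten_cons,
      rle_replicate_append hn (by rw [hP]; exact List.IsChain.rel_head? hchain), hP]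

theorem rle_eq_iff {S : List ℕ} {P : List (ℕ × ℕ)} : rle S = P ↔ IsRLE S P :=
  ⟨fun h => h ▸ isRLE_rle S, IsRLE.rle_eq⟩

theorem getLast?_map_fst_rle : ∀ l : List ℕ, (rle l).getLast?.map Prod.fst = l.getLast?
  | [] => rfl
  | a :: t => by
    have ih := getLast?_map_fst_rle t
    rw [rle]
    rcases h : rle t with _ | ⟨⟨b, n⟩, r⟩
    · rw [h] at ih
      rw [List.getLast?_eq_none_iff.1 ih.symm]; rfl
    · rw [h] at ih
      have ht : t ≠ [] := by rintro rfl; simp at ih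
      rw [List.getLast?_cons_of_ne_nil ht, ← ih]
      dsimp only
      split_ifs with hab
      · cases r <;> simp_all
      · simp

theorem exists_getLast?_rle_eq {l : List ℕ} {a : ℕ} (h : l.getLast? = some a) :
    ∃ n, (rle l).getLast? = some (a, n) := by
  obtain ⟨⟨b, n⟩, hl, rfl⟩ := Option.map_eq_some_iff.1 ((getLast?_map_fst_rle l).trans h)
  exact ⟨n, hl⟩

theorem rle_append_replicate {l : List ℕ} {a n : ℕ} (hn : n ≠ 0) (hl : l.getLast? ≠ some a) :
    rle (l ++ List.replicate n a) = rle l ++ [(a, n)] := by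
  obtain ⟨hpos, hchain, hflat⟩ := isRLE_rle l
  rw [rle_eq_iff]
  refine ⟨?_, hchain.append (List.isChain_singleton _) ?_, by simp [← hflat]⟩
  · simp only [List.forall_mem_append, List.forall_mem_singleton]
    exact ⟨hpos, Nat.one_le_iff_ne_zero.2 hn⟩
  · intro p hp q hq
    rw [List.head?_cons, Option.mem_some_iff] at hq
    subst hq
    rintro rfl
    exact hl (by rw [← getLast?_map_fst_rle, hp]; rfl)

theorem IsRLE.replicate_infix {S : List ℕ} {P : List (ℕ × ℕ)} (h : IsRLE S P) {p : ℕ × ℕ}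
    (hp : p ∈ P) : List.replicate p.2 p.1 <:+: S :=
  h.2.2 ▸ List.infix_of_mem_flatten (List.mem_map_of_mem hp)

theorem IsRLE.fst_mem {S : List ℕ} {P : List (ℕ × ℕ)} (h : IsRLE S P) {p : ℕ × ℕ}
    (hp : p ∈ P) : p.1 ∈ S :=
  (h.replicate_infix hp).subset (List.mem_replicate.2 ⟨by have := h.1 p hp; omega, rfl⟩)

theorem IsRLE.snd_le {S : List ℕ} {P : List (ℕ × ℕ)} (h : IsRLE S P) {n : ℕ}
    (hS : ∀ x, ¬ List.replicate (n + 1) x <:+: S) {p : ℕ × ℕ} (hp : p ∈ P) : p.2 ≤ n := by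
  by_contra! hlt
  refine hS p.1 ((List.prefix_replicate_iff.2 ⟨?_, ?_⟩).isInfix.trans (h.replicate_infix hp))
  · simpa using hlt
  · simp

def stutter (l : List ℕ) : List ℕ := l.flatMap fun v => [v, v]

theorem stutter_replicate (n a : ℕ) : stutter (List.replicate n a) = List.replicate (2 * n) a := by
  induction n with
  | zero => rfl
  | succ n ih => simp [stutter, List.replicate_succ, ← ih, Nat.mul_succ]

theorem stutter_flatten (L : List (List ℕ)) : stutter L.flatten = (L.map stutter).flatten := by
  induction L with
  | nil => rfl
  | cons l L ih => simp [stutter, ← ih]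

theorem IsRLE.stutter {S : List ℕ} {P : List (ℕ × ℕ)} (h : IsRLE S P) :
    IsRLE (stutter S) (P.map fun p => (p.1, 2 * p.2)) := by
  obtain ⟨hpos, hchain, rfl⟩ := h
  refine ⟨?_, (List.isChain_map _).2 hchain, ?_⟩
  · simp only [List.mem_map]
    rintro _ ⟨p, hp, rfl⟩
    have := hpos p hp
    simp only
    omega
  · simp [stutter_flatten, stutter_replicate, Function.comp_def]

theorem rle_stutter (l : List ℕ) : rle (stutter l) = (rle l).map fun p => (p.1, 2 * p.2) :=
  (isRLE_rle l).stutter.rle_eq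

def lookSay (T : List ℕ) : List ℕ := (rle T).flatMap fun p => [p.2, p.1]

theorem lsa_eq_stutter_lookSay (T : List ℕ) : lsa T = stutter (lookSay T) := by
  simp [lsa, stutter, lookSay, List.flatMap_assoc]

theorem forall_mem_lookSay_of_propP {k : List ℕ} (hk : propP k) :
    ∀ x ∈ lookSay k, x ∈ ({1, 2, 4, 6} : Set ℕ) := by
  simp only [lookSay, List.mem_flatMap, List.mem_cons, List.not_mem_nil, or_false]
  rintro x ⟨p, hp, rfl | rfl⟩
  · have := (hk p hp).2
    simp only [Set.mem_insert_iff, Set.mem_singleton_iff] at this ⊢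
    omega
  · exact (hk p hp).1

theorem not_replicate_four_infix_flatMap_append :
    ∀ {R : List (ℕ × ℕ)}, R.IsChain (fun p q => p.1 ≠ q.1) → ∀ c x : ℕ,
      ¬ List.replicate 4 x <:+: R.flatMap (fun p => [p.2, p.1]) ++ [c]
  | [], _, c, x, h => by simpa using h.length_le
  | [_], _, c, x, h => by simpa using h.length_le
  | p :: q :: R, hR, c, x, h => by
    have hpq := (List.isChain_cons_cons.1 hR).1
    simp only [List.flatMap_cons, List.cons_append, List.nil_append] at h
    rcases List.infix_cons_iff.1 h with h | h
    · simp only [List.replicate_succ, List.replicate_zero, List.cons_prefix_cons, List.nil_prefix,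
        and_true] at h
      exact hpq (h.2.1.symm.trans h.2.2.2)
    rcases List.infix_cons_iff.1 h with h | h
    · simp only [List.replicate_succ, List.replicate_zero, List.cons_prefix_cons] at h
      exact hpq (h.1.symm.trans h.2.2.1)
    exact not_replicate_four_infix_flatMap_append hR.tail c x h

theorem propP_stutter {w : List ℕ} (hdigit : ∀ x ∈ w, x ∈ ({1, 2, 4, 6} : Set ℕ))
    (hrun : ∀ x, ¬ List.replicate 4 x <:+: w) : propP (stutter w) := by
  rw [propP, rle_stutter]
  intro p hp
  obtain ⟨⟨a, n⟩, hq, rfl⟩ := List.mem_map.1 hp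
  have hrle := isRLE_rle w
  have hpos := hrle.1 _ hq
  have hle := hrle.snd_le hrun hq
  refine ⟨hdigit a (hrle.fst_mem hq), ?_⟩
  dsimp only at hpos hle ⊢
  interval_cases n <;> simp

theorem lsa_tail_dd_general (d : ℕ) (hd : d ∉ ({1, 2, 4, 6} : Set ℕ))
    (k : List ℕ) (hk : propP k) (hlast : ∃ m : ℕ, (rle k).getLast? = some (2, m)) :
    ∃ k' : List ℕ, lsa (k ++ [d, d]) = k' ++ [d, d] ∧ propP k' ∧
      ∃ m : ℕ, (rle k').getLast? = some (2, m) := by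
  obtain ⟨m, hm⟩ := hlast
  have hk2 : k.getLast? = some 2 := by rw [← getLast?_map_fst_rle, hm]; rfl
  have hd2 : d ≠ 2 := by rintro rfl; simp at hd
  have hrle : rle (k ++ [d, d]) = rle k ++ [(d, 2)] :=
    rle_append_replicate two_ne_zero (by rw [hk2]; simpa using hd2.symm)
  refine ⟨stutter (lookSay k ++ [2]), ?_, ?_, ?_⟩
  · rw [lsa_eq_stutter_lookSay, lookSay, hrle]
    simp [stutter, lookSay]
  · exact propP_stutter (List.forall_mem_append.2 ⟨forall_mem_lookSay_of_propP hk, by simp⟩)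
      (not_replicate_four_infix_flatMap_append (isRLE_rle k).2.1 2)
  · obtain ⟨n, hn⟩ := exists_getLast?_rle_eq (List.getLast?_concat ..)
    exact ⟨2 * n, by rw [rle_stutter, List.getLast?_map, hn]; rfl⟩

/-- One step of look-and-say-again preserves the shape `k ‖ dd` with `k`
satisfying `P` and ending in a run of base digit 2. -/
theorem lsa_tail_dd (d : ℕ) (hd9 : d ≤ 9) (hd : d ∉ ({1, 2, 4, 6} : Set ℕ))
    (k : List ℕ) (hk : propP k) (hlast : ∃ m : ℕ, (rle k).getLast? = some (2, m)) :
    ∃ k' : List ℕ, lsa (k ++ [d, d]) = k' ++ [d, d] ∧ propP k' ∧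
      ∃ m : ℕ, (rle k').getLast? = some (2, m) :=
  lsa_tail_dd_general d hd k hk hlast
end

section
/- Define on lists of pieces (pairs (a,b) of digit and positive count) the maps C sending a^b to the two pieces b^1 a^1, L sending a^b to b^2 a^2, and η sending a^b to κ(a)^{2b}, where κ(a) = 2a (interpreted as the two-digit block, i.e., the piece list [2^1, a^1] flattened appropriately) for a ∈ {1,2,3} and κ(a) = 1 otherwise. Then for any single piece a^b with a ∈ {1,2,3} and b ∈ {1,2,3}, (L ∘ η)(a^b) = (η ∘ C)(a^b) as digit strings. -/
/-- `κ(a) = 2a` for `a ∈ {1,2,3}` and `1` otherwise. -/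
def kap (a : ℕ) : ℕ := if a = 1 ∨ a = 2 ∨ a = 3 then 2 * a else 1

/-- `η` on a single piece `a^b`: the digit `κ(a)` repeated `2b` times. -/
def etaPiece (p : ℕ × ℕ) : List ℕ := List.replicate (2 * p.2) (kap p.1)

/-- `η` on a list of pieces, by concatenation. -/
def etaList (P : List (ℕ × ℕ)) : List ℕ := (P.map etaPiece).flatten

/-- The look-and-say-again operation `L` on a single piece `a^b`, as a string. -/
def lsaPiece (p : ℕ × ℕ) : List ℕ := [p.2, p.2, p.1, p.1]

/-- The classical look-and-say operation `C` on a single piece `a^b`, as a string. -/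
def csPiece (p : ℕ × ℕ) : List ℕ := [p.2, p.1]

/-! `C(a^b)` is the string `b a`: one run `b^2` if `a = b`, two runs `b^1 a^1` otherwise.
Either way `η` turns it into `κ(b)^2 κ(a)^2`, and `κ(b) = 2b`. -/

theorem kap_of_mem {a : ℕ} (ha : a ∈ ({1, 2, 3} : Set ℕ)) : kap a = 2 * a :=
  if_pos ha

theorem rle_pair_self (x : ℕ) : rle [x, x] = [(x, 2)] := by
  simp [rle]

theorem rle_pair_of_ne {x y : ℕ} (h : x ≠ y) : rle [x, y] = [(x, 1), (y, 1)] := by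
  simp [rle, h]

theorem L_eta_eq_eta_C_general (a b : ℕ)
    (hb : b ∈ ({1, 2, 3} : Set ℕ)) :
    lsaPiece (kap a, 2 * b) = etaList (rle (csPiece (a, b))) := by
  have hkb : kap b = 2 * b := kap_of_mem hb
  by_cases hba : b = a
  · subst hba
    simp [csPiece, rle_pair_self, etaList, etaPiece, lsaPiece, hkb]
  · simp [csPiece, rle_pair_of_ne hba, etaList, etaPiece, lsaPiece, hkb]

/-- `L ∘ η = η ∘ C` on a single piece `a^b` with `a, b ∈ {1,2,3}`:
`L` applied to the `η`-image piece `κ(a)^{2b}` yields the same digit string as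
`η` applied to the pieces of the string `C(a^b)`. -/
theorem L_eta_eq_eta_C (a b : ℕ) (ha : a ∈ ({1, 2, 3} : Set ℕ))
    (hb : b ∈ ({1, 2, 3} : Set ℕ)) :
    lsaPiece (kap a, 2 * b) = etaList (rle (csPiece (a, b))) :=
  L_eta_eq_eta_C_general a b hb
end

section
/- For two starting digits d, d' both not in {1,2,4,6}, the look-and-say-again sequences with seeds d and d' agree at every index after replacing every occurrence of d by d': i.e., T_n(d') is obtained from T_n(d) by substituting d' for d. -/
lemma rle_eq_nil_iff {t : List ℕ} : rle t = [] ↔ t = [] := by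
  refine ⟨fun h => ?_, fun h => h ▸ rfl⟩
  cases t with
  | nil => rfl
  | cons a t =>
    rw [rle] at h
    split at h
    · simp at h
    · split_ifs at h

lemma rle_singleton (a : ℕ) : rle [a] = [(a, 1)] := rfl

lemma rle_cons_of_eq {a n : ℕ} {t : List ℕ} {r : List (ℕ × ℕ)} (h : rle t = (a, n) :: r) :
    rle (a :: t) = (a, n + 1) :: r := by
  rw [rle, h]
  exact if_pos rfl

lemma rle_cons_of_ne {a b n : ℕ} {t : List ℕ} {r : List (ℕ × ℕ)} (h : rle t = (b, n) :: r)
    (hab : a ≠ b) : rle (a :: t) = (a, 1) :: (b, n) :: r := by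
  rw [rle, h]
  exact if_neg hab

lemma rle_replicate_append_of_eq {a n : ℕ} {t : List ℕ} {r : List (ℕ × ℕ)}
    (h : rle t = (a, n) :: r) (k : ℕ) : rle (List.replicate k a ++ t) = (a, n + k) :: r := by
  induction k with
  | zero => simpa using h
  | succ k ih => rw [List.replicate_succ, List.cons_append, rle_cons_of_eq ih, Nat.add_assoc]

lemma rle_replicate_append_of_ne {a b n k : ℕ} {t : List ℕ} {r : List (ℕ × ℕ)}
    (h : rle t = (b, n) :: r) (hab : a ≠ b) (hk : k ≠ 0) :
    rle (List.replicate k a ++ t) = (a, k) :: (b, n) :: r := by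
  obtain ⟨k, rfl⟩ := Nat.exists_eq_add_one_of_ne_zero hk
  rw [List.replicate_succ', List.append_assoc, List.singleton_append,
    rle_replicate_append_of_eq (rle_cons_of_ne h hab), Nat.add_comm]

lemma fst_mem_of_mem_rle {t : List ℕ} {p : ℕ × ℕ} (hp : p ∈ rle t) : p.1 ∈ t := by
  induction t generalizing p with
  | nil => simp [rle] at hp
  | cons a t ih =>
    rcases h : rle t with _ | ⟨⟨b, n⟩, r⟩
    · rw [rle_eq_nil_iff.mp h, rle_singleton, List.mem_singleton] at hp
      simp [hp]
    · by_cases hab : a = b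
      · subst hab
        rw [rle_cons_of_eq h] at hp
        rcases List.mem_cons.mp hp with rfl | hp
        · exact List.mem_cons_self
        · exact List.mem_cons_of_mem a (ih (h ▸ List.mem_cons_of_mem _ hp))
      · rw [rle_cons_of_ne h hab] at hp
        rcases List.mem_cons.mp hp with rfl | hp
        · exact List.mem_cons_self
        · exact List.mem_cons_of_mem a (ih (h ▸ hp))

lemma isChain_rle (t : List ℕ) : List.IsChain (fun p q : ℕ × ℕ => p.1 ≠ q.1) (rle t) := by
  induction t with
  | nil => exact List.isChain_nil
  | cons a t ih =>
    rcases h : rle t with _ | ⟨⟨b, n⟩, r⟩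
    · rw [rle_eq_nil_iff.mp h, rle_singleton]
      exact List.isChain_singleton _
    · rw [h] at ih
      by_cases hab : a = b
      · subst hab
        rw [rle_cons_of_eq h]
        exact List.isChain_cons.mpr (List.isChain_cons.mp ih)
      · rw [rle_cons_of_ne h hab]
        exact List.isChain_cons_cons.mpr ⟨hab, ih⟩

lemma rle_map_of_injOn {f : ℕ → ℕ} {t : List ℕ} (hf : Set.InjOn f {x | x ∈ t}) :
    rle (t.map f) = (rle t).map (Prod.map f id) := by
  induction t with
  | nil => rfl
  | cons a t ih =>
    have ih := ih (hf.mono fun x hx => List.mem_cons_of_mem a hx)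
    rcases h : rle t with _ | ⟨⟨b, n⟩, r⟩
    · rw [rle_eq_nil_iff.mp h]
      rfl
    · rw [h, List.map_cons] at ih
      by_cases hab : a = b
      · subst hab
        rw [List.map_cons, rle_cons_of_eq ih, rle_cons_of_eq h]
        rfl
      · have hb : b ∈ t := fst_mem_of_mem_rle (p := (b, n)) (h ▸ List.mem_cons_self)
        have hfab : f a ≠ f b := fun hfab =>
          hab (hf List.mem_cons_self (List.mem_cons_of_mem a hb) hfab)
        rw [List.map_cons, rle_cons_of_ne ih hfab, rle_cons_of_ne h hab]
        rfl

lemma lsa_map_of_injOn {f : ℕ → ℕ} {T : List ℕ} (hf : Set.InjOn f {x | x ∈ T})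
    (hcount : ∀ p ∈ rle T, f p.2 = p.2) : lsa (T.map f) = (lsa T).map f := by
  rw [lsa, lsa, rle_map_of_injOn hf, List.flatMap_map, List.map_flatMap]
  refine List.flatMap_congr fun p hp => ?_
  simp [hcount p hp]

lemma exists_mem_rle_of_mem_lsa {T : List ℕ} {x : ℕ} (hx : x ∈ lsa T) :
    ∃ p ∈ rle T, x = p.1 ∨ x = p.2 := by
  obtain ⟨p, hp, hxp⟩ := List.mem_flatMap.mp hx
  exact ⟨p, hp, by simp at hxp; tauto⟩

/-- The runs of the output are made of the pairs `c c`, `a a` of the blocks `c c a a`. A run can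
join the pairs `c c` and `a a` of one block only if `c = a`, and never the pairs `a a` of two
consecutive blocks, so it is made of at most three pairs. -/
lemma rle_flatMap_of_isChain (a c : ℕ) (P : List (ℕ × ℕ))
    (hP : List.IsChain (fun p q : ℕ × ℕ => p.1 ≠ q.1) ((a, c) :: P)) :
    ∃ k R, rle (((a, c) :: P).flatMap fun p => [p.2, p.2, p.1, p.1]) = (c, k) :: R ∧
      k ∈ ({2, 4, 6} : Set ℕ) ∧ (k ≠ 2 → c = a) ∧ ∀ q ∈ R, q.2 ∈ ({2, 4, 6} : Set ℕ) := by
  induction P generalizing a c with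
  | nil =>
    by_cases hca : c = a
    · subst hca
      exact ⟨4, [], by simp [rle], by simp, fun _ => rfl, by simp⟩
    · exact ⟨2, [(a, 2)], by simp [rle, hca], by simp, fun h => absurd rfl h, by simp⟩
  | cons p P ih =>
    obtain ⟨a', c'⟩ := p
    obtain ⟨haa', hP'⟩ := List.isChain_cons_cons.mp hP
    obtain ⟨k, R, hM, hk, hk2, hR⟩ := ih a' c' hP'
    set M := ((a', c') :: P).flatMap fun p => [p.2, p.2, p.1, p.1]
    rw [show ((a, c) :: (a', c') :: P).flatMap (fun p => [p.2, p.2, p.1, p.1]) =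
      List.replicate 2 c ++ (List.replicate 2 a ++ M) from rfl]
    by_cases hac' : a = c'
    · subst hac'
      obtain rfl : k = 2 := by_contra fun hne => haa' (hk2 hne)
      have haa := rle_replicate_append_of_eq hM 2
      by_cases hca : c = a
      · subst hca
        exact ⟨6, R, rle_replicate_append_of_eq haa 2, by simp, fun _ => rfl, hR⟩
      · exact ⟨2, (a, 4) :: R, rle_replicate_append_of_ne haa hca two_ne_zero, by simp,
          fun h => absurd rfl h, List.forall_mem_cons.mpr ⟨by simp, hR⟩⟩
    · have haa := rle_replicate_append_of_ne hM hac' two_ne_zero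
      by_cases hca : c = a
      · subst hca
        exact ⟨4, (c', k) :: R, rle_replicate_append_of_eq haa 2, by simp, fun _ => rfl,
          List.forall_mem_cons.mpr ⟨hk, hR⟩⟩
      · exact ⟨2, (a, 2) :: (c', k) :: R, rle_replicate_append_of_ne haa hca two_ne_zero,
          by simp, fun h => absurd rfl h,
          List.forall_mem_cons.mpr ⟨by simp, List.forall_mem_cons.mpr ⟨hk, hR⟩⟩⟩

lemma snd_mem_of_mem_rle_lsa {T : List ℕ} {q : ℕ × ℕ} (hq : q ∈ rle (lsa T)) :
    q.2 ∈ ({2, 4, 6} : Set ℕ) := by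
  rcases h : rle T with _ | ⟨⟨a, c⟩, P⟩
  · simp [lsa, h, rle] at hq
  · have hP := isChain_rle T
    rw [h] at hP
    obtain ⟨k, R, hkR, hk, -, hR⟩ := rle_flatMap_of_isChain a c P hP
    rw [lsa, h, hkR] at hq
    rcases List.mem_cons.mp hq with rfl | hq
    exacts [hk, hR q hq]

lemma snd_mem_of_mem_rle_iterate_lsa (d n : ℕ) {q : ℕ × ℕ} (hq : q ∈ rle (lsa^[n] [d])) :
    q.2 ∈ ({1, 2, 4, 6} : Set ℕ) := by
  cases n with
  | zero =>
    rw [Function.iterate_zero_apply, rle_singleton, List.mem_singleton] at hq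
    simp [hq]
  | succ n =>
    rw [Function.iterate_succ_apply'] at hq
    have h246 := snd_mem_of_mem_rle_lsa hq
    simp only [Set.mem_insert_iff, Set.mem_singleton_iff] at h246 ⊢
    omega

lemma mem_iterate_lsa (d n : ℕ) {x : ℕ} (hx : x ∈ lsa^[n] [d]) :
    x = d ∨ x ∈ ({1, 2, 4, 6} : Set ℕ) := by
  induction n generalizing x with
  | zero => exact Or.inl (List.mem_singleton.mp hx)
  | succ n ih =>
    rw [Function.iterate_succ_apply'] at hx
    obtain ⟨p, hp, rfl | rfl⟩ := exists_mem_rle_of_mem_lsa hx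
    · exact ih (fst_mem_of_mem_rle hp)
    · exact Or.inr (snd_mem_of_mem_rle_iterate_lsa d n hp)

lemma injOn_subst (d d' : ℕ) :
    Set.InjOn (fun x => if x = d then d' else x) {x | x = d ∨ x ≠ d'} := by
  intro x hx y hy hxy
  simp only [Set.mem_ofPred_eq] at hx hy hxy
  split_ifs at hxy <;> grind

theorem lsa_seq_subst_general (d d' : ℕ)
    (hd : d ∉ ({1, 2, 4, 6} : Set ℕ)) (hd' : d' ∉ ({1, 2, 4, 6} : Set ℕ)) :
    ∀ n : ℕ, (lsa^[n] [d]).map (fun x => if x = d then d' else x) = lsa^[n] [d'] := by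
  intro n
  induction n with
  | zero => simp
  | succ n ih =>
    have hinj : Set.InjOn (fun x => if x = d then d' else x) {x | x ∈ lsa^[n] [d]} :=
      (injOn_subst d d').mono fun x hx => (mem_iterate_lsa d n hx).imp_right
        fun hx (hxd' : x = d') => hd' (hxd' ▸ hx)
    have hcount : ∀ p ∈ rle (lsa^[n] [d]), (if p.2 = d then d' else p.2) = p.2 := fun p hp =>
      if_neg fun (h : p.2 = d) => hd (h ▸ snd_mem_of_mem_rle_iterate_lsa d n hp)
    rw [Function.iterate_succ_apply', Function.iterate_succ_apply', ← ih,
      lsa_map_of_injOn hinj hcount]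

/-- For seeds `d, d' ∉ {1,2,4,6}`, the look-and-say-again sequences agree at
every index after substituting `d'` for `d`. -/
theorem lsa_seq_subst (d d' : ℕ) (hd9 : d ≤ 9) (hd'9 : d' ≤ 9)
    (hd : d ∉ ({1, 2, 4, 6} : Set ℕ)) (hd' : d' ∉ ({1, 2, 4, 6} : Set ℕ)) :
    ∀ n : ℕ, (lsa^[n] [d]).map (fun x => if x = d then d' else x) = lsa^[n] [d'] :=
  lsa_seq_subst_general d d' hd hd'
end
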